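/- arXiv:2206.14731 — 2 statements merged into one kernel-verified Lean document; each statement's English description precedes it below -/
import Mathlib

section
/- Let G be a group, A a finite cyclic subgroup of the center of G, and let (H₁,N₁) and (H₂,N₂) be special pairs in G with H₁ ≤ H₂ and N₂ ≤ N₁. Set N₁' = N₁∩H₂ and N₁'' = N₁∩Z(H₂). Then: (1) every element of N₁' commutes with every element of N₂, and N₁'∩N₂ = N₂∩H₂ = Z(N₁')∩Z(N₂); (2) (H₁, N₁') is a special pair in the group H₂ (with respect to A), H₁∩N₁' = H₁∩N₁, and Z(N₁') = N₁''·(N₁∩H₁). -/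
open Pointwise
open scoped commutatorElement


/-- `(H, N)` is a special pair in `G` (with respect to a subgroup `A` of the center of `G`):
`H` and `N` both contain `A`, `H` is a normal subgroup of finite index, every element of `N`
commutes with every element of `H`, `⁅n, g⁆ ∈ A` for all `n ∈ N`, `g ∈ G`, and
`Z_G(H ⊓ N) = NH`. -/
structure IsSpecialPair {G : Type*} [Group G] (A H N : Subgroup G) : Prop where
  A_le_H : A ≤ H
  A_le_N : A ≤ N
  normal : H.Normal
  finiteIndex : H.FiniteIndex
  commute : ∀ n ∈ N, ∀ h ∈ H, Commute n h
  comm_mem : ∀ n ∈ N, ∀ g : G, ⁅n, g⁆ ∈ A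
  centralizer_inf_eq : Subgroup.centralizer ((H ⊓ N : Subgroup G) : Set G) = N ⊔ H

section Aux

/-- The commutator map `g ↦ ⁅n, g⁆` as a homomorphism into `A`, when all commutators
`⁅n, g⁆` lie in the central subgroup `A`. -/
def commHom {G : Type*} [Group G] {A : Subgroup G} (hA : A ≤ Subgroup.center G)
    (n : G) (hn : ∀ g : G, ⁅n, g⁆ ∈ A) : G →* ↥A where
  toFun g := ⟨⁅n, g⁆, hn g⟩
  map_one' := by
    ext
    show ⁅n, (1 : G)⁆ = 1
    group
  map_mul' y z := by
    ext
    show ⁅n, y * z⁆ = ⁅n, y⁆ * ⁅n, z⁆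
    have hcen : ∀ g : G, g * ⁅n, z⁆ = ⁅n, z⁆ * g :=
      Subgroup.mem_center_iff.mp (hA (hn z))
    have h1 : ⁅n, y * z⁆ = ⁅n, y⁆ * (y * ⁅n, z⁆ * y⁻¹) := by group
    rw [h1, hcen y]
    group

lemma commHom_coe {G : Type*} [Group G] {A : Subgroup G} (hA : A ≤ Subgroup.center G)
    (n : G) (hn : ∀ g : G, ⁅n, g⁆ ∈ A) (g : G) : (commHom hA n hn g : G) = ⁅n, g⁆ := rfl

lemma aux_card_hom_cyclic_le {A : Type*} [CommGroup A] [Finite A] [IsCyclic A]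
    {k : ℕ} (hk : 0 < k) : Nat.card (Multiplicative (ZMod k) →* A) ≤ k := by
  haveI : NeZero k := ⟨hk.ne'⟩
  classical
  haveI : Fintype A := Fintype.ofFinite A
  have hgen : ∀ x : Multiplicative (ZMod k),
      x = (Multiplicative.ofAdd (1 : ZMod k)) ^ (ZMod.val x.toAdd) := by
    intro x
    rw [← ofAdd_nsmul, nsmul_eq_mul, mul_one, ZMod.natCast_val, ZMod.cast_id, ofAdd_toAdd]
  have hpow : (Multiplicative.ofAdd (1 : ZMod k)) ^ k = 1 := by
    rw [← ofAdd_nsmul, nsmul_eq_mul, mul_one, ZMod.natCast_self, ofAdd_zero]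
  let f : (Multiplicative (ZMod k) →* A) → {a : A // a ^ k = 1} := fun φ =>
    ⟨φ (Multiplicative.ofAdd 1), by rw [← map_pow, hpow, map_one]⟩
  have hfinj : Function.Injective f := by
    intro φ ψ h
    have h' : φ (Multiplicative.ofAdd 1) = ψ (Multiplicative.ofAdd 1) :=
      congrArg Subtype.val h
    refine MonoidHom.ext fun x => ?_
    rw [hgen x, map_pow, map_pow, h']
  have h1 : Nat.card (Multiplicative (ZMod k) →* A) ≤ Nat.card {a : A // a ^ k = 1} :=
    Nat.card_le_card_of_injective f hfinj
  refine h1.trans ?_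
  rw [Nat.card_eq_fintype_card, Fintype.card_subtype]
  exact (Finset.card_le_card (by intro a ha; simpa using ha)).trans
    (IsCyclic.card_pow_eq_one_le hk)

lemma aux_card_monoidHom_le (D A : Type*) [CommGroup D] [Finite D] [CommGroup A] [Finite A]
    [IsCyclic A] : Nat.card (D →* A) ≤ Nat.card D := by
  classical
  obtain ⟨ι, hι, n, hn1, he⟩ := CommGroup.equiv_prod_multiplicative_zmod_of_finite D
  haveI := hι
  let e := he.some
  have h1 : Nat.card (D →* A) = Nat.card (∀ i, (Multiplicative (ZMod (n i)) →* A)) :=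
    Nat.card_congr ((MulEquiv.monoidHomCongrLeft e).trans
      (Pi.monoidHomMulEquiv _ A)).toEquiv
  have h2 : Nat.card D = ∏ i, n i := by
    rw [Nat.card_congr e.toEquiv, Nat.card_pi]
    exact Finset.prod_congr rfl fun i _ => by
      rw [Nat.card_congr (Multiplicative.toAdd (α := ZMod (n i))), Nat.card_zmod]
  rw [h1, h2, Nat.card_pi]
  exact Finset.prod_le_prod (fun _ _ => Nat.zero_le _)
    (fun i _ => aux_card_hom_cyclic_le (lt_trans one_pos (hn1 i)))

/-- The centralizer of `H₁ ⊓ N₁` inside `H₂` is `(N₁ ⊓ H₂) ⊔ H₁`. -/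
lemma centralizer_inf_in_H₂ {G : Type*} [Group G] {A H₁ N₁ H₂ : Subgroup G}
    (hsp1 : IsSpecialPair A H₁ N₁) (hH : H₁ ≤ H₂) :
    ∀ g ∈ H₂, (g ∈ Subgroup.centralizer ((H₁ ⊓ N₁ : Subgroup G) : Set G) ↔
      g ∈ (N₁ ⊓ H₂) ⊔ H₁) := by
  intro g hg
  constructor
  · intro hgc
    rw [hsp1.centralizer_inf_eq] at hgc
    haveI := hsp1.normal
    have hset : g ∈ ((N₁ : Set G) * (H₁ : Set G)) := by
      rw [← Subgroup.mul_normal N₁ H₁]; exact hgc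
    obtain ⟨x, hx, y, hy, hxy⟩ := hset
    have hxH₂ : x ∈ H₂ := by
      have : x = g * y⁻¹ := by rw [← hxy]; group
      rw [this]; exact mul_mem hg (inv_mem (hH hy))
    rw [← hxy]
    exact mul_mem ((le_sup_left : N₁ ⊓ H₂ ≤ (N₁ ⊓ H₂) ⊔ H₁) (Subgroup.mem_inf.mpr ⟨hx, hxH₂⟩))
      ((le_sup_right : H₁ ≤ (N₁ ⊓ H₂) ⊔ H₁) hy)
  · intro hgR
    rw [hsp1.centralizer_inf_eq]
    exact (sup_le (inf_le_left.trans le_sup_left) le_sup_right : (N₁ ⊓ H₂) ⊔ H₁ ≤ N₁ ⊔ H₁) hgR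

/-- Key duality lemma: if `n ∈ N₁ ⊓ H₂` centralizes `N₁ ⊓ H₂`, then `n` is a product of an
element of `N₁` central in `H₂` and an element of `N₁ ⊓ H₁`. -/
lemma key_decomp {G : Type*} [Group G] (A H₁ N₁ H₂ : Subgroup G)
    (hA : A ≤ Subgroup.center G) (hcyc : IsCyclic A) (hfin : Finite A)
    (hsp1 : IsSpecialPair A H₁ N₁) (hH : H₁ ≤ H₂) (hH₂n : H₂.Normal)
    {n : G} (hnN : n ∈ N₁) (hnH : n ∈ H₂)
    (hcomm : ∀ m ∈ N₁ ⊓ H₂, Commute n m) :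
    n ∈ (N₁ ⊓ (H₂ ⊓ Subgroup.centralizer (H₂ : Set G))) ⊔ (N₁ ⊓ H₁) := by
  classical
  haveI := hfin
  haveI := hcyc
  letI : CommGroup ↥A :=
    { (inferInstance : Group ↥A) with
      mul_comm := fun a b => Subtype.ext ((Subgroup.mem_center_iff.mp (hA a.2) ↑b).symm) }
  -- the subgroup `R = (N₁ ⊓ H₂) ⊔ H₁`
  set R : Subgroup G := (N₁ ⊓ H₂) ⊔ H₁ with hRdef
  have hRle : R ≤ H₂ := sup_le inf_le_right hH
  have hRcent : ∀ g ∈ H₂,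
      (g ∈ Subgroup.centralizer ((H₁ ⊓ N₁ : Subgroup G) : Set G) ↔ g ∈ R) :=
    centralizer_inf_in_H₂ hsp1 hH
  -- normality facts
  have hN₁n : N₁.Normal := by
    constructor
    intro x hx g
    have h : g * x * g⁻¹ = ⁅x, g⁆⁻¹ * x := by group
    rw [h]
    exact mul_mem (inv_mem (hsp1.A_le_N (hsp1.comm_mem x hx g))) hx
  haveI hN₁Hn : (N₁ ⊓ H₂).Normal :=
    ⟨fun x hx g => Subgroup.mem_inf.mpr
      ⟨hN₁n.conj_mem x (Subgroup.mem_inf.mp hx).1 g,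
        hH₂n.conj_mem x (Subgroup.mem_inf.mp hx).2 g⟩⟩
  haveI := hsp1.normal
  have hRn : R.Normal := Subgroup.sup_normal _ _
  haveI := hsp1.finiteIndex
  set R' : Subgroup ↥H₂ := R.subgroupOf H₂ with hR'def
  haveI hR'n : R'.Normal := hRn.subgroupOf H₂
  haveI : (H₁.subgroupOf H₂).FiniteIndex := inferInstance
  haveI hR'fi : R'.FiniteIndex :=
    Subgroup.finiteIndex_of_le
      (fun x hx => (Subgroup.mem_subgroupOf.mpr
        ((le_sup_right : H₁ ≤ R) (Subgroup.mem_subgroupOf.mp hx))))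
  haveI : Finite (↥H₂ ⧸ R') := Subgroup.finite_quotient_of_finiteIndex (H := R')
  -- commutators of `H₂` lie in `R`
  have hcommR : ∀ u v : G, u ∈ H₂ → v ∈ H₂ → ⁅u, v⁆ ∈ R := by
    intro u v hu hv
    have hmem : ⁅u, v⁆ ∈ H₂ := by
      rw [commutatorElement_def]
      exact mul_mem (mul_mem (mul_mem hu hv) (inv_mem hu)) (inv_mem hv)
    refine (hRcent _ hmem).mp (Subgroup.mem_centralizer_iff.mpr ?_)
    intro c hc
    have hcN : c ∈ N₁ := (Subgroup.mem_inf.mp hc).2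
    have h1 : commHom hA c (hsp1.comm_mem c hcN) ⁅u, v⁆ = 1 := by
      rw [map_commutatorElement]
      exact commutatorElement_eq_one_iff_commute.mpr (mul_comm _ _)
    have h2 : ⁅c, ⁅u, v⁆⁆ = 1 := congrArg Subtype.val h1
    exact (commutatorElement_eq_one_iff_commute.mp h2).eq
  -- the quotient `H₂ ⧸ R'` is commutative
  letI : CommGroup (↥H₂ ⧸ R') :=
    { (inferInstance : Group (↥H₂ ⧸ R')) with
      mul_comm := fun x y => by
        refine QuotientGroup.induction_on x fun a => QuotientGroup.induction_on y fun b => ?_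
        show ((a : ↥H₂) : ↥H₂ ⧸ R') * (b : ↥H₂ ⧸ R') = (b : ↥H₂ ⧸ R') * (a : ↥H₂ ⧸ R')
        rw [← QuotientGroup.mk_mul, ← QuotientGroup.mk_mul, QuotientGroup.eq]
        rw [Subgroup.mem_subgroupOf]
        have hval : (((a * b)⁻¹ * (b * a) : ↥H₂) : G) = ⁅((b : G))⁻¹, ((a : G))⁻¹⁆ := by
          push_cast
          group
        rw [hval]
        exact hcommR _ _ (inv_mem b.2) (inv_mem a.2) }
  -- the pairing homomorphism `Φ : H₁ ⊓ N₁ → Hom(H₂, A)`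
  have hcenA : ∀ a : G, a ∈ A → ∀ g : G, g * a = a * g := fun a ha =>
    Subgroup.mem_center_iff.mp (hA ha)
  let Φ : ↥(H₁ ⊓ N₁) →* (↥H₂ →* ↥A) := MonoidHom.mk'
    (fun b => (commHom hA ↑b (hsp1.comm_mem ↑b (Subgroup.mem_inf.mp b.2).2)).comp H₂.subtype)
    (by
      intro a b
      refine MonoidHom.ext fun y => Subtype.ext ?_
      show ⁅(↑a : G) * ↑b, (↑y : G)⁆ = ⁅(↑a : G), (↑y : G)⁆ * ⁅(↑b : G), (↑y : G)⁆
      have hcen : ∀ g : G, g * ⁅(↑b : G), (↑y : G)⁆ = ⁅(↑b : G), (↑y : G)⁆ * g :=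
        fun g => hcenA _ (hsp1.comm_mem ↑b (Subgroup.mem_inf.mp b.2).2 ↑y) g
      have h1 : ⁅(↑a : G) * ↑b, (↑y : G)⁆ =
          (↑a : G) * ⁅(↑b : G), (↑y : G)⁆ * (↑a : G)⁻¹ * ⁅(↑a : G), (↑y : G)⁆ := by group
      rw [h1, hcen (↑a : G), mul_inv_cancel_right]
      exact (hcen _).symm)
  -- the subgroup of homomorphisms vanishing on `R`
  let F𝓕 : Subgroup (↥H₂ →* ↥A) :=
    { carrier := {φ | ∀ y : ↥H₂, (y : G) ∈ R → φ y = 1}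
      one_mem' := fun _ _ => rfl
      mul_mem' := by
        intro f g hf hg y hy
        rw [MonoidHom.mul_apply, hf y hy, hg y hy, mul_one]
      inv_mem' := by
        intro f hf y hy
        rw [MonoidHom.inv_apply, hf y hy, inv_one] }
  set Θ : Subgroup (↥H₂ →* ↥A) := Φ.range with hΘdef
  have hΘ𝓕 : Θ ≤ F𝓕 := by
    rintro φ ⟨b, rfl⟩ y hy
    refine Subtype.ext ?_
    show ⁅(↑b : G), (↑y : G)⁆ = 1
    have hyc : (↑y : G) ∈ Subgroup.centralizer ((H₁ ⊓ N₁ : Subgroup G) : Set G) :=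
      (hRcent _ y.2).mpr hy
    exact commutatorElement_eq_one_iff_commute.mpr
      (Subgroup.mem_centralizer_iff.mp hyc ↑b b.2)
  -- φn : the commutator pairing with n, vanishes on R
  let φn : ↥H₂ →* ↥A := (commHom hA n (hsp1.comm_mem n hnN)).comp H₂.subtype
  have hφn : φn ∈ F𝓕 := by
    intro y hy
    have hRcn : R ≤ Subgroup.centralizer {n} := by
      refine sup_le ?_ ?_
      · intro m hm
        refine Subgroup.mem_centralizer_iff.mpr fun g hg => ?_
        rw [Set.mem_singleton_iff] at hg
        rw [show g = n from hg]
        exact (hcomm m hm).eq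
      · intro h hh
        refine Subgroup.mem_centralizer_iff.mpr fun g hg => ?_
        rw [Set.mem_singleton_iff] at hg
        rw [show g = n from hg]
        exact (hsp1.commute n hnN h hh).eq
    refine Subtype.ext ?_
    show ⁅n, (↑y : G)⁆ = 1
    exact commutatorElement_eq_one_iff_commute.mpr
      (Subgroup.mem_centralizer_iff.mp (hRcn hy) n (Set.mem_singleton n))
  -- injection of F𝓕 into Hom(H₂ ⧸ R', A)
  let F : ↥F𝓕 → ((↥H₂ ⧸ R') →* ↥A) := fun φ =>
    QuotientGroup.lift R' φ.1 (fun y hy => φ.2 y (Subgroup.mem_subgroupOf.mp hy))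
  have hFinj : Function.Injective F := by
    intro φ ψ h
    refine Subtype.ext (MonoidHom.ext fun y => ?_)
    have := congrArg (fun f => f ((y : ↥H₂) : ↥H₂ ⧸ R')) h
    exact this
  -- injection of H₂ ⧸ R' into Hom(Θ, A)
  let e : ↥H₂ →* (↥Θ →* ↥A) :=
    { toFun := fun y =>
        { toFun := fun θ => θ.1 y
          map_one' := rfl
          map_mul' := fun _ _ => rfl }
      map_one' := MonoidHom.ext fun θ => θ.1.map_one
      map_mul' := fun y y' => MonoidHom.ext fun θ => θ.1.map_mul y y' }
  let E : (↥H₂ ⧸ R') →* (↥Θ →* ↥A) :=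
    QuotientGroup.lift R' e
      (fun y hy => MonoidHom.ext fun θ => hΘ𝓕 θ.2 y (Subgroup.mem_subgroupOf.mp hy))
  have hEinj : Function.Injective E := by
    refine (injective_iff_map_eq_one E).mpr fun q hq => ?_
    revert hq
    refine QuotientGroup.induction_on q fun y hq => ?_
    rw [QuotientGroup.eq_one_iff, Subgroup.mem_subgroupOf]
    refine (hRcent _ y.2).mp (Subgroup.mem_centralizer_iff.mpr fun c hc => ?_)
    have hθ : (⟨Φ ⟨c, hc⟩, ⟨⟨c, hc⟩, rfl⟩⟩ : ↥Θ).1 y = 1 := by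
      have := congrArg (fun f => f (⟨Φ ⟨c, hc⟩, ⟨⟨c, hc⟩, rfl⟩⟩ : ↥Θ)) hq
      exact this
    have h4 : ⁅c, (↑y : G)⁆ = 1 := congrArg Subtype.val hθ
    exact (commutatorElement_eq_one_iff_commute.mp h4).eq
  -- finiteness
  haveI : Finite ((↥H₂ ⧸ R') →* ↥A) :=
    Finite.of_injective (fun f => (f : (↥H₂ ⧸ R') → ↥A)) DFunLike.coe_injective
  haveI : Finite ↥F𝓕 := Finite.of_injective F hFinj
  have hincinj : Function.Injective (fun θ : ↥Θ => (⟨θ.1, hΘ𝓕 θ.2⟩ : ↥F𝓕)) := by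
    intro a b h
    have h2 := congrArg Subtype.val h
    exact Subtype.ext h2
  haveI : Finite ↥Θ :=
    Finite.of_injective (fun θ : ↥Θ => (⟨θ.1, hΘ𝓕 θ.2⟩ : ↥F𝓕)) hincinj
  haveI : Finite (↥Θ →* ↥A) :=
    Finite.of_injective (fun f => (f : ↥Θ → ↥A)) DFunLike.coe_injective
  -- the counting chain
  have c1 : Nat.card ↥F𝓕 ≤ Nat.card ((↥H₂ ⧸ R') →* ↥A) :=
    Nat.card_le_card_of_injective F hFinj
  have c2 : Nat.card ((↥H₂ ⧸ R') →* ↥A) ≤ Nat.card (↥H₂ ⧸ R') :=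
    aux_card_monoidHom_le _ _
  have c3 : Nat.card (↥H₂ ⧸ R') ≤ Nat.card (↥Θ →* ↥A) :=
    Nat.card_le_card_of_injective E hEinj
  have c4 : Nat.card (↥Θ →* ↥A) ≤ Nat.card ↥Θ := aux_card_monoidHom_le _ _
  have c5 : Nat.card ↥Θ ≤ Nat.card ↥F𝓕 :=
    Nat.card_le_card_of_injective _ hincinj
  have hcards : Nat.card ↥F𝓕 ≤ Nat.card ↥Θ := by omega
  have hΘeq : (Θ : Set (↥H₂ →* ↥A)) = (F𝓕 : Set (↥H₂ →* ↥A)) := by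
    refine Set.eq_of_subset_of_ncard_le hΘ𝓕 ?_ (Set.toFinite _)
    rw [← Nat.card_coe_set_eq, ← Nat.card_coe_set_eq]
    exact hcards
  have hmem : φn ∈ Θ := by
    rw [← SetLike.mem_coe, hΘeq]
    exact hφn
  obtain ⟨b, hb⟩ := hmem
  have hbH₁ : (↑b : G) ∈ H₁ := (Subgroup.mem_inf.mp b.2).1
  have hbN₁ : (↑b : G) ∈ N₁ := (Subgroup.mem_inf.mp b.2).2
  have hbc : ∀ g : G, ∀ hg : g ∈ H₂, ⁅(↑b : G), g⁆ = ⁅n, g⁆ := fun g hg =>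
    congrArg Subtype.val (DFunLike.congr_fun hb (⟨g, hg⟩ : ↥H₂))
  have hnb : Commute n (↑b : G) := hsp1.commute n hnN ↑b hbH₁
  have hzc : ∀ g ∈ H₂, g * (n * (↑b : G)⁻¹) = (n * (↑b : G)⁻¹) * g := by
    intro g hg
    have h0 := hbc g hg
    rw [commutatorElement_def, commutatorElement_def] at h0
    have h1 : (↑b : G) * g * (↑b : G)⁻¹ = n * g * n⁻¹ := mul_right_cancel h0
    have h2 : (↑b : G)⁻¹ * (n * g * n⁻¹) * (↑b : G) = g := by rw [← h1]; group
    have h3 : g * ((↑b : G)⁻¹ * n) = ((↑b : G)⁻¹ * n) * g := by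
      conv_lhs => rw [← h2]
      group
    rw [hnb.inv_right.eq]
    exact h3
  have hz : n * (↑b : G)⁻¹ ∈ N₁ ⊓ (H₂ ⊓ Subgroup.centralizer (H₂ : Set G)) :=
    Subgroup.mem_inf.mpr ⟨mul_mem hnN (inv_mem hbN₁),
      Subgroup.mem_inf.mpr ⟨mul_mem hnH (inv_mem (hH hbH₁)),
        Subgroup.mem_centralizer_iff.mpr fun g hg => hzc g hg⟩⟩
  have hdecomp : n = (n * (↑b : G)⁻¹) * ↑b := (inv_mul_cancel_right n ↑b).symm
  rw [hdecomp]
  exact mul_mem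
    ((le_sup_left : N₁ ⊓ (H₂ ⊓ Subgroup.centralizer (H₂ : Set G)) ≤ _) hz)
    ((le_sup_right : N₁ ⊓ H₁ ≤ _) (Subgroup.mem_inf.mpr ⟨hbN₁, hbH₁⟩))

end Aux

/-- Let `(H₁, N₁)`, `(H₂, N₂)` be special pairs in `G` with `H₁ ≤ H₂`,
`N₂ ≤ N₁`; set `N₁' = N₁ ∩ H₂` and `N₁'' = N₁ ∩ Z(H₂)`. Then (1) `N₁'` and `N₂` commute
elementwise and `N₁' ∩ N₂ = N₂ ∩ H₂ = Z(N₁') ∩ Z(N₂)`; (2) `(H₁, N₁')` is a special pair in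
`H₂` (with respect to `A`), `H₁ ∩ N₁' = H₁ ∩ N₁`, and `Z(N₁') = N₁''·(N₁ ∩ H₁)`. -/
theorem stmt_17 {G : Type*} [Group G] (A H₁ N₁ H₂ N₂ : Subgroup G)
    (hA : A ≤ Subgroup.center G) (hcyc : IsCyclic A) (hfin : Finite A)
    (hsp1 : IsSpecialPair A H₁ N₁) (hsp2 : IsSpecialPair A H₂ N₂)
    (hH : H₁ ≤ H₂) (hN : N₂ ≤ N₁) :
    (∀ a ∈ N₁ ⊓ H₂, ∀ b ∈ N₂, Commute a b) ∧
    ((N₁ ⊓ H₂) ⊓ N₂ = N₂ ⊓ H₂) ∧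
    ((N₁ ⊓ H₂) ⊓ N₂ =
      ((N₁ ⊓ H₂) ⊓ Subgroup.centralizer ((N₁ ⊓ H₂ : Subgroup G) : Set G)) ⊓
        (N₂ ⊓ Subgroup.centralizer (N₂ : Set G))) ∧
    (A.subgroupOf H₂ ≤ Subgroup.center ↥H₂) ∧
    IsSpecialPair (A.subgroupOf H₂) (H₁.subgroupOf H₂) ((N₁ ⊓ H₂).subgroupOf H₂) ∧
    (H₁ ⊓ (N₁ ⊓ H₂) = H₁ ⊓ N₁) ∧
    ((N₁ ⊓ H₂) ⊓ Subgroup.centralizer ((N₁ ⊓ H₂ : Subgroup G) : Set G) =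
      (N₁ ⊓ (H₂ ⊓ Subgroup.centralizer (H₂ : Set G))) ⊔ (N₁ ⊓ H₁)) := by
  have hcent := centralizer_inf_in_H₂ hsp1 hH
  refine ⟨?g1, ?g2, ?g3, ?g4, ?g5, ?g6, ?g7⟩
  case g1 =>
    intro a ha b hb
    exact (hsp2.commute b hb a (Subgroup.mem_inf.mp ha).2).symm
  case g2 =>
    apply le_antisymm
    · intro x hx
      obtain ⟨hx1, hx2⟩ := Subgroup.mem_inf.mp hx
      exact Subgroup.mem_inf.mpr ⟨hx2, (Subgroup.mem_inf.mp hx1).2⟩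
    · intro x hx
      obtain ⟨hx1, hx2⟩ := Subgroup.mem_inf.mp hx
      exact Subgroup.mem_inf.mpr ⟨Subgroup.mem_inf.mpr ⟨hN hx1, hx2⟩, hx1⟩
  case g3 =>
    apply le_antisymm
    · intro x hx
      obtain ⟨hx1, hx2⟩ := Subgroup.mem_inf.mp hx
      have hxH₂ : x ∈ H₂ := (Subgroup.mem_inf.mp hx1).2
      refine Subgroup.mem_inf.mpr ⟨Subgroup.mem_inf.mpr ⟨hx1, ?_⟩,
        Subgroup.mem_inf.mpr ⟨hx2, ?_⟩⟩
      · refine Subgroup.mem_centralizer_iff.mpr fun m hm => ?_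
        have hmH₂ : m ∈ H₂ := (Subgroup.mem_inf.mp hm).2
        exact ((hsp2.commute x hx2 m hmH₂).symm).eq
      · refine Subgroup.mem_centralizer_iff.mpr fun m hm => ?_
        exact (hsp2.commute m hm x hxH₂).eq
    · intro x hx
      obtain ⟨hx1, hx2⟩ := Subgroup.mem_inf.mp hx
      exact Subgroup.mem_inf.mpr ⟨(Subgroup.mem_inf.mp hx1).1, (Subgroup.mem_inf.mp hx2).1⟩
  case g4 =>
    intro a ha
    rw [Subgroup.mem_center_iff]
    intro b
    exact Subtype.ext (Subgroup.mem_center_iff.mp (hA (Subgroup.mem_subgroupOf.mp ha)) ↑b)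
  case g5 =>
    constructor
    case A_le_H =>
      intro x hx
      exact Subgroup.mem_subgroupOf.mpr (hsp1.A_le_H (Subgroup.mem_subgroupOf.mp hx))
    case A_le_N =>
      intro x hx
      have hx' := Subgroup.mem_subgroupOf.mp hx
      exact Subgroup.mem_subgroupOf.mpr
        (Subgroup.mem_inf.mpr ⟨hsp1.A_le_N hx', hsp2.A_le_H hx'⟩)
    case normal => exact hsp1.normal.subgroupOf H₂
    case finiteIndex =>
      haveI := hsp1.finiteIndex
      infer_instance
    case commute =>
      intro n hn h hh
      have hn' := (Subgroup.mem_inf.mp (Subgroup.mem_subgroupOf.mp hn)).1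
      have hh' := Subgroup.mem_subgroupOf.mp hh
      exact Subtype.ext (hsp1.commute ↑n hn' ↑h hh').eq
    case comm_mem =>
      intro n hn g
      have hn' := (Subgroup.mem_inf.mp (Subgroup.mem_subgroupOf.mp hn)).1
      refine Subgroup.mem_subgroupOf.mpr ?_
      have : ((⁅n, g⁆ : ↥H₂) : G) = ⁅(↑n : G), (↑g : G)⁆ := by
        rw [commutatorElement_def, commutatorElement_def]
        push_cast
        rfl
      rw [this]
      exact hsp1.comm_mem ↑n hn' ↑g
    case centralizer_inf_eq =>
      rw [← Subgroup.subgroupOf_sup inf_le_right hH]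
      ext x
      rw [Subgroup.mem_subgroupOf, ← hcent ↑x x.2]
      constructor
      · intro hx
        refine Subgroup.mem_centralizer_iff.mpr fun g hg => ?_
        have hg' : g ∈ H₁ ⊓ N₁ := hg
        have hgH₁ := (Subgroup.mem_inf.mp hg').1
        have hgN₁ := (Subgroup.mem_inf.mp hg').2
        have hgH₂ : g ∈ H₂ := hH hgH₁
        have hmem : (⟨g, hgH₂⟩ : ↥H₂) ∈
            H₁.subgroupOf H₂ ⊓ (N₁ ⊓ H₂).subgroupOf H₂ :=
          Subgroup.mem_inf.mpr ⟨Subgroup.mem_subgroupOf.mpr hgH₁,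
            Subgroup.mem_subgroupOf.mpr (Subgroup.mem_inf.mpr ⟨hgN₁, hgH₂⟩)⟩
        exact congrArg Subtype.val (Subgroup.mem_centralizer_iff.mp hx _ hmem)
      · intro hx
        refine Subgroup.mem_centralizer_iff.mpr fun y hy => ?_
        have hy' : y ∈ H₁.subgroupOf H₂ ⊓ (N₁ ⊓ H₂).subgroupOf H₂ := hy
        have hyH₁ := Subgroup.mem_subgroupOf.mp (Subgroup.mem_inf.mp hy').1
        have hyN₁ := (Subgroup.mem_inf.mp
          (Subgroup.mem_subgroupOf.mp (Subgroup.mem_inf.mp hy').2)).1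
        have : (↑y : G) ∈ H₁ ⊓ N₁ := Subgroup.mem_inf.mpr ⟨hyH₁, hyN₁⟩
        exact Subtype.ext (Subgroup.mem_centralizer_iff.mp hx ↑y this)
  case g6 =>
    apply le_antisymm
    · intro x hx
      obtain ⟨hx1, hx2⟩ := Subgroup.mem_inf.mp hx
      exact Subgroup.mem_inf.mpr ⟨hx1, (Subgroup.mem_inf.mp hx2).1⟩
    · intro x hx
      obtain ⟨hx1, hx2⟩ := Subgroup.mem_inf.mp hx
      exact Subgroup.mem_inf.mpr ⟨hx1, Subgroup.mem_inf.mpr ⟨hx2, hH hx1⟩⟩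
  case g7 =>
    apply le_antisymm
    · intro x hx
      obtain ⟨hx1, hx2⟩ := Subgroup.mem_inf.mp hx
      have hxN₁ := (Subgroup.mem_inf.mp hx1).1
      have hxH₂ := (Subgroup.mem_inf.mp hx1).2
      have hxc : ∀ m ∈ N₁ ⊓ H₂, m * x = x * m :=
        fun m hm => Subgroup.mem_centralizer_iff.mp hx2 m hm
      -- x centralizes H₁ ⊓ N₁, hence x ∈ N₁ ⊔ H₁; decompose x = v * w
      have hxcent : x ∈ Subgroup.centralizer ((H₁ ⊓ N₁ : Subgroup G) : Set G) := by
        refine Subgroup.mem_centralizer_iff.mpr fun c hc => ?_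
        have hc' : c ∈ H₁ ⊓ N₁ := hc
        exact hxc c (Subgroup.mem_inf.mpr ⟨(Subgroup.mem_inf.mp hc').2,
          hH (Subgroup.mem_inf.mp hc').1⟩)
      rw [hsp1.centralizer_inf_eq] at hxcent
      haveI := hsp1.normal
      have hset : x ∈ ((N₁ : Set G) * (H₁ : Set G)) := by
        rw [← Subgroup.mul_normal N₁ H₁]; exact hxcent
      obtain ⟨v, hv, w, hw, hvw⟩ := hset
      have hwN : w ∈ N₁ := by
        have : w = v⁻¹ * x := by rw [← hvw]; group
        rw [this]; exact mul_mem (inv_mem hv) hxN₁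
      have hvH₂ : v ∈ H₂ := by
        have : v = x * w⁻¹ := by rw [← hvw]; group
        rw [this]; exact mul_mem hxH₂ (inv_mem (hH hw))
      have hvcomm : ∀ m ∈ N₁ ⊓ H₂, Commute v m := by
        intro m hm
        have h1 : Commute x m := (hxc m hm).symm
        have h2 : Commute m w := hsp1.commute m (Subgroup.mem_inf.mp hm).1 w hw
        have : v = x * w⁻¹ := by rw [← hvw]; group
        rw [this]
        exact Commute.mul_left h1 h2.symm.inv_left
      have hvdec := key_decomp A H₁ N₁ H₂ hA hcyc hfin hsp1 hH hsp2.normal hv hvH₂ hvcomm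
      rw [← hvw]
      exact mul_mem hvdec
        ((le_sup_right : N₁ ⊓ H₁ ≤ _) (Subgroup.mem_inf.mpr ⟨hwN, hw⟩))
    · refine sup_le ?_ ?_
      · intro x hx
        obtain ⟨hx1, hx2⟩ := Subgroup.mem_inf.mp hx
        obtain ⟨hx2a, hx2b⟩ := Subgroup.mem_inf.mp hx2
        refine Subgroup.mem_inf.mpr ⟨Subgroup.mem_inf.mpr ⟨hx1, hx2a⟩, ?_⟩
        refine Subgroup.centralizer_le ?_ hx2b
        intro a ha
        exact (Subgroup.mem_inf.mp ha).2
      · intro x hx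
        obtain ⟨hx1, hx2⟩ := Subgroup.mem_inf.mp hx
        refine Subgroup.mem_inf.mpr ⟨Subgroup.mem_inf.mpr ⟨hx1, hH hx2⟩, ?_⟩
        refine Subgroup.mem_centralizer_iff.mpr fun m hm => ?_
        exact (hsp1.commute m (Subgroup.mem_inf.mp hm).1 x hx2).eq
end

section
/- Let G be a group, A a finite cyclic subgroup of the center of G, and let (H₁,N₁) and (H₂,N₂) be special pairs in G with H₁ ≤ H₂ and N₂ ≤ N₁. Set N₁' = N₁∩H₂ and N₁'' = N₁∩Z(H₂). Then (H₂, N₁''N₂) is a special pair in G, and the following identities hold: H₂ ∩ (N₁''N₂) = N₁'' = Z(H₂)∩N₁' = (Z(G)∩N₁'')·(N₂∩H₂) = (Z(G)∩N₁')·(N₂∩H₂); moreover Z(G)∩(N₁''N₂) = Z(G)∩N₁ = (Z(G)∩N₂)·(Z(G)∩N₁'). -/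
open Pointwise
open scoped commutatorElement


namespace Stmt18Aux

variable {G : Type*} [Group G]

lemma comm_mul_left {a b g : G} (hb : ∀ x : G, x * ⁅b, g⁆ = ⁅b, g⁆ * x) :
    ⁅a * b, g⁆ = ⁅b, g⁆ * ⁅a, g⁆ := by
  have h1 : ⁅a * b, g⁆ = a * ⁅b, g⁆ * (g * a⁻¹ * g⁻¹) := by
    simp only [commutatorElement_def]; group
  rw [h1, hb a]
  simp only [commutatorElement_def]; group

lemma comm_mul_right {a h g : G} (hg : ∀ x : G, x * ⁅a, g⁆ = ⁅a, g⁆ * x) :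
    ⁅a, h * g⁆ = ⁅a, g⁆ * ⁅a, h⁆ := by
  have h1 : ⁅a, h * g⁆ = (a * h * a⁻¹) * ⁅a, g⁆ * h⁻¹ := by
    simp only [commutatorElement_def]; group
  rw [h1, hg (a * h * a⁻¹)]
  simp only [commutatorElement_def]; group

lemma comm_inv_left {a g : G} (ha : ∀ x : G, x * ⁅a, g⁆ = ⁅a, g⁆ * x) :
    ⁅a⁻¹, g⁆ = ⁅a, g⁆⁻¹ := by
  have h := comm_mul_left (a := a⁻¹) ha
  rw [inv_mul_cancel, commutatorElement_one_left] at h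
  exact eq_inv_of_mul_eq_one_right h.symm

lemma comm_inv_right {a g : G} (ha : ∀ x : G, x * ⁅a, g⁆ = ⁅a, g⁆ * x) :
    ⁅a, g⁻¹⁆ = ⁅a, g⁆⁻¹ := by
  have h := comm_mul_right (h := g⁻¹) ha
  rw [inv_mul_cancel, commutatorElement_one_right] at h
  exact eq_inv_of_mul_eq_one_right h.symm

lemma comm_comm_eq_one {t : G} (hct : ∀ g x : G, x * ⁅g, t⁆ = ⁅g, t⁆ * x) (x y : G) :
    ⁅⁅x, y⁆, t⁆ = 1 := by
  have hxy : ⁅x, y⁆ = (x * y) * (x⁻¹ * y⁻¹) := by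
    simp only [commutatorElement_def]; group
  rw [hxy, comm_mul_left (hct _), comm_mul_left (hct _), comm_mul_left (hct _),
    comm_inv_left (hct _), comm_inv_left (hct _)]
  have hco : Commute ⁅y, t⁆ ⁅x, t⁆ := hct x ⁅y, t⁆
  have h2 : ⁅x, t⁆⁻¹ * ⁅y, t⁆ = ⁅y, t⁆ * ⁅x, t⁆⁻¹ := hco.symm.inv_left
  calc ⁅y, t⁆⁻¹ * ⁅x, t⁆⁻¹ * (⁅y, t⁆ * ⁅x, t⁆)
      = ⁅y, t⁆⁻¹ * (⁅x, t⁆⁻¹ * ⁅y, t⁆) * ⁅x, t⁆ := by group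
    _ = ⁅y, t⁆⁻¹ * (⁅y, t⁆ * ⁅x, t⁆⁻¹) * ⁅x, t⁆ := by rw [h2]
    _ = 1 := by group

lemma normal_of_comm_mem {A N : Subgroup G} (hAN : A ≤ N)
    (h : ∀ n ∈ N, ∀ g : G, ⁅n, g⁆ ∈ A) : N.Normal := by
  constructor
  intro n hn g
  have h1 : ⁅g, n⁆ ∈ A := by
    rw [← commutatorElement_inv]; exact A.inv_mem (h n hn g)
  have h2 : g * n * g⁻¹ = ⁅g, n⁆ * n := by simp only [commutatorElement_def]; group
  rw [h2]
  exact N.mul_mem (hAN h1) hn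

/-- The pairing homomorphism `x ↦ ⁅x, t⁆` into `A`, when all such commutators lie in the
central subgroup `A`. -/
def pairHom (A : Subgroup G) (hA : A ≤ Subgroup.center G) (t : G)
    (ht : ∀ x : G, ⁅x, t⁆ ∈ A) : G →* A where
  toFun x := ⟨⁅x, t⁆, ht x⟩
  map_one' := by
    exact Subtype.ext (by simp)
  map_mul' x y := by
    refine Subtype.ext ?_
    have hc : ∀ z : G, z * ⁅y, t⁆ = ⁅y, t⁆ * z := fun z =>
      Subgroup.mem_center_iff.mp (hA (ht y)) z
    show ⁅x * y, t⁆ = ⁅x, t⁆ * ⁅y, t⁆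
    rw [comm_mul_left hc, hc ⁅x, t⁆]

universe u

/-- For a finite commutative group `X` and a finite cyclic group `A`,
`|Hom(X, A)| ≤ |X|`. -/
theorem card_hom_le_aux {A : Type u} [CommGroup A] [Finite A] (hcyc : IsCyclic A) :
    ∀ (n : ℕ) (X : Type u) [CommGroup X] [Finite X], Nat.card X ≤ n →
      Nat.card (X →* A) ≤ Nat.card X := by
  intro n
  induction n with
  | zero =>
    intro X _ _ hle
    have := Finite.card_pos (α := X)
    omega
  | succ n ih =>
    intro X _ _ hle
    haveI : Finite (X →* A) := Finite.of_injective _ (DFunLike.coe_injective (F := X →* A))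
    by_cases hX : ∀ x : X, x = 1
    · have h1 : Nat.card (X →* A) ≤ 1 := by
        rw [Finite.card_le_one_iff_subsingleton]
        exact ⟨fun f g => MonoidHom.ext fun x => by rw [hX x, map_one, map_one]⟩
      have := Finite.card_pos (α := X)
      omega
    · push_neg at hX
      obtain ⟨x, hx⟩ := hX
      set Y := Subgroup.zpowers x with hY
      set d := orderOf x with hd
      have hdY : Nat.card Y = d := Nat.card_zpowers x
      have hd1 : 2 ≤ d := by
        have h0 : 0 < d := orderOf_pos x
        have h1 : d ≠ 1 := fun h => hx (orderOf_eq_one_iff.mp h)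
        omega
      haveI : Finite (↥Y →* A) := Finite.of_injective _ (DFunLike.coe_injective (F := ↥Y →* A))
      let r : (X →* A) →* (↥Y →* A) :=
        { toFun := fun f => f.comp Y.subtype
          map_one' := by ext; simp
          map_mul' := fun f g => by ext; simp }
      -- bound the range of r
      set gx : ↥Y := ⟨x, Subgroup.mem_zpowers x⟩ with hgx
      have hgxd : gx ^ d = 1 := by
        refine Subtype.ext ?_
        push_cast
        exact pow_orderOf_eq_one x
      have hYinj : Function.Injective
          (fun (f : ↥Y →* A) => (⟨f gx, by rw [← map_pow, hgxd, map_one]⟩ :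
            {a : A // a ^ d = 1})) := by
        intro f g hfg
        have hfg' : f gx = g gx := congrArg Subtype.val hfg
        ext ⟨y, hy⟩
        obtain ⟨k, hk⟩ := Subgroup.mem_zpowers_iff.mp hy
        have hyk : (⟨y, hy⟩ : ↥Y) = gx ^ k := by
          refine Subtype.ext ?_
          push_cast
          exact hk.symm
        rw [hyk, map_zpow, map_zpow, hfg']
      have hsub : Nat.card {a : A // a ^ d = 1} ≤ d := by
        classical
        haveI := Fintype.ofFinite A
        haveI := hcyc
        rw [Nat.card_eq_fintype_card, Fintype.card_subtype]
        exact IsCyclic.card_pow_eq_one_le (by omega)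
      have hYcard : Nat.card (↥Y →* A) ≤ d :=
        le_trans (Nat.card_le_card_of_injective _ hYinj) hsub
      have hrange : Nat.card r.range ≤ d :=
        le_trans (Subgroup.card_le_card_group _) hYcard
      -- bound the kernel of r
      haveI : Finite (X ⧸ Y) := Quotient.finite _
      haveI : Finite ((X ⧸ Y) →* A) :=
        Finite.of_injective _ (DFunLike.coe_injective (F := (X ⧸ Y) →* A))
      have hkerY : ∀ f : ↥r.ker, Y ≤ (f : X →* A).ker := by
        intro f y hy
        have h1 : r (f : X →* A) = 1 := f.2
        have h2 := DFunLike.congr_fun h1 (⟨y, hy⟩ : ↥Y)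
        simpa [r] using h2
      have hkinj : Function.Injective
          (fun (f : ↥r.ker) => QuotientGroup.lift Y (f : X →* A) (hkerY f)) := by
        intro f g hfg
        refine Subtype.ext (MonoidHom.ext fun w => ?_)
        have := DFunLike.congr_fun hfg (QuotientGroup.mk w)
        simpa using this
      have hker1 : Nat.card r.ker ≤ Nat.card ((X ⧸ Y) →* A) :=
        Nat.card_le_card_of_injective _ hkinj
      -- Lagrange on X
      have hlag : Nat.card X = Nat.card (X ⧸ Y) * Nat.card Y :=
        Subgroup.card_eq_card_quotient_mul_card_subgroup Y
      have hq1 : 1 ≤ Nat.card (X ⧸ Y) := Finite.card_pos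
      have hqle : Nat.card (X ⧸ Y) ≤ n := by
        have h2 : Nat.card (X ⧸ Y) * 2 ≤ Nat.card (X ⧸ Y) * d :=
          Nat.mul_le_mul_left _ hd1
        rw [hdY] at hlag
        omega
      have hker : Nat.card r.ker ≤ Nat.card (X ⧸ Y) :=
        le_trans hker1 (ih (X ⧸ Y) hqle)
      -- combine
      have hlag2 : Nat.card (X →* A) = Nat.card ((X →* A) ⧸ r.ker) * Nat.card r.ker :=
        Subgroup.card_eq_card_quotient_mul_card_subgroup r.ker
      have hquot : Nat.card ((X →* A) ⧸ r.ker) = Nat.card r.range :=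
        Nat.card_congr (QuotientGroup.quotientKerEquivRange r).toEquiv
      calc Nat.card (X →* A) = Nat.card r.range * Nat.card r.ker := by rw [hlag2, hquot]
        _ ≤ d * Nat.card (X ⧸ Y) := Nat.mul_le_mul hrange hker
        _ = Nat.card X := by rw [hlag, hdY, Nat.mul_comm]


/-- Key lemma: if `(H₂, N₂)` is a special pair, `z` has all commutators in `A`, and `z`
centralizes `N₂ ⊔ H₂`, then `z` agrees with an element of `H₂ ⊓ N₂` modulo the center. -/
theorem key_lemma {G : Type u} [Group G] (A H₂ N₂ : Subgroup G)
    (hA : A ≤ Subgroup.center G) (hcyc : IsCyclic A) (hfin : Finite A)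
    (hsp2 : IsSpecialPair A H₂ N₂) (z : G)
    (hzA : ∀ g : G, ⁅z, g⁆ ∈ A)
    (hzc : ∀ x ∈ N₂ ⊔ H₂, Commute x z) :
    ∃ m ∈ H₂ ⊓ N₂, z * m⁻¹ ∈ Subgroup.center G := by
  haveI := hfin
  haveI hH₂n : H₂.Normal := hsp2.normal
  haveI hN₂n : N₂.Normal := normal_of_comm_mem hsp2.A_le_N hsp2.comm_mem
  set K := N₂ ⊔ H₂ with hK
  haveI hKn : K.Normal := Subgroup.sup_normal N₂ H₂
  haveI : H₂.FiniteIndex := hsp2.finiteIndex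
  haveI : K.FiniteIndex := Subgroup.finiteIndex_of_le le_sup_right
  have htA : ∀ t ∈ N₂, ∀ x : G, ⁅x, t⁆ ∈ A := fun t ht x => by
    rw [← commutatorElement_inv]; exact A.inv_mem (hsp2.comm_mem t ht x)
  have hcent : ∀ {w : G}, w ∈ A → ∀ x : G, x * w = w * x := fun hw x =>
    Subgroup.mem_center_iff.mp (hA hw) x
  -- the quotient G ⧸ K is a finite commutative group
  have hcommK : ∀ x y : G, ⁅x, y⁆ ∈ K := by
    intro x y
    rw [hK, ← hsp2.centralizer_inf_eq, Subgroup.mem_centralizer_iff]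
    intro t ht
    have htN : t ∈ N₂ := ht.2
    have h1 : ⁅⁅x, y⁆, t⁆ = 1 := comm_comm_eq_one (fun g w => hcent (htA t htN g) w) x y
    exact ((commutatorElement_eq_one_iff_commute.mp h1).symm).eq
  have hqcomm : ∀ q r : G ⧸ K, q * r = r * q := by
    intro q r
    refine QuotientGroup.induction_on q fun x => ?_
    refine QuotientGroup.induction_on r fun y => ?_
    rw [← QuotientGroup.mk_mul, ← QuotientGroup.mk_mul, QuotientGroup.eq]
    have he : (x * y)⁻¹ * (y * x) = ⁅y⁻¹, x⁻¹⁆ := by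
      simp only [commutatorElement_def]; group
    rw [he]
    exact hcommK y⁻¹ x⁻¹
  letI : CommGroup (G ⧸ K) := { (inferInstance : Group (G ⧸ K)) with mul_comm := hqcomm }
  letI : CommGroup A :=
    { (inferInstance : Group A) with
      mul_comm := fun a b => Subtype.ext (hcent b.2 a.1) }
  have hKcent : ∀ x ∈ K, ∀ t ∈ H₂ ⊓ N₂, Commute x t := by
    intro x hx t ht
    rw [hK, ← hsp2.centralizer_inf_eq] at hx
    exact (Subgroup.mem_centralizer_iff.mp hx t ht).symm
  -- the pairing homomorphism
  let Φ : ↥(H₂ ⊓ N₂) →* ((G ⧸ K) →* A) :=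
    { toFun := fun t => QuotientGroup.lift K (pairHom A hA t.1 (htA t.1 t.2.2))
        (fun x hx => MonoidHom.mem_ker.mpr (Subtype.ext
          (commutatorElement_eq_one_iff_commute.mpr (hKcent x hx t.1 t.2))))
      map_one' := by
        refine MonoidHom.ext fun q => ?_
        refine QuotientGroup.induction_on q fun x => ?_
        rw [QuotientGroup.lift_mk']
        exact Subtype.ext (by simp [pairHom])
      map_mul' := fun t s => by
        refine MonoidHom.ext fun q => ?_
        refine QuotientGroup.induction_on q fun x => ?_
        rw [MonoidHom.mul_apply, QuotientGroup.lift_mk', QuotientGroup.lift_mk',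
          QuotientGroup.lift_mk']
        refine Subtype.ext ?_
        show ⁅x, ((t * s : ↥(H₂ ⊓ N₂)) : G)⁆ = ⁅x, (t : G)⁆ * ⁅x, (s : G)⁆
        have hcs : ∀ w : G, w * ⁅x, (s : G)⁆ = ⁅x, (s : G)⁆ * w := fun w =>
          hcent (htA s.1 s.2.2 x) w
        rw [show ((t * s : ↥(H₂ ⊓ N₂)) : G) = (t : G) * (s : G) from rfl]
        rw [comm_mul_right hcs, hcs ⁅x, (t : G)⁆] }
  have hΦval : ∀ (t : ↥(H₂ ⊓ N₂)) (x : G),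
      ((Φ t) (QuotientGroup.mk x) : G) = ⁅x, (t : G)⁆ := fun t x =>
    congrArg Subtype.val (QuotientGroup.lift_mk' K
      (fun w hw => MonoidHom.mem_ker.mpr (Subtype.ext
        (commutatorElement_eq_one_iff_commute.mpr (hKcent w hw t.1 t.2)))) x)
  haveI : Finite (G ⧸ K) := inferInstance
  haveI : Finite ((G ⧸ K) →* A) :=
    Finite.of_injective _ (DFunLike.coe_injective (F := (G ⧸ K) →* A))
  haveI : Finite ↥Φ.range := inferInstance
  haveI : Finite (↥Φ.range →* A) :=
    Finite.of_injective _ (DFunLike.coe_injective (F := ↥Φ.range →* A))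
  -- evaluation homomorphism into the double dual
  let ev : (G ⧸ K) →* (↥Φ.range →* A) :=
    { toFun := fun q =>
        { toFun := fun φ => φ.1 q
          map_one' := rfl
          map_mul' := fun φ ψ => rfl }
      map_one' := by
        refine MonoidHom.ext fun φ => ?_
        exact map_one φ.1
      map_mul' := fun q r => by
        refine MonoidHom.ext fun φ => ?_
        exact map_mul φ.1 q r }
  have hev_inj : Function.Injective ev := by
    refine (injective_iff_map_eq_one ev).mpr ?_
    intro q hq
    revert hq
    refine QuotientGroup.induction_on q fun g => ?_
    intro hg
    rw [QuotientGroup.eq_one_iff, hK, ← hsp2.centralizer_inf_eq,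
      Subgroup.mem_centralizer_iff]
    intro t ht
    have h1 := DFunLike.congr_fun hg (⟨Φ ⟨t, ht⟩, ⟨⟨t, ht⟩, rfl⟩⟩ : ↥Φ.range)
    have h2 : ⁅g, t⁆ = 1 := by
      rw [← hΦval ⟨t, ht⟩ g]
      exact congrArg Subtype.val h1
    exact ((commutatorElement_eq_one_iff_commute.mp h2).symm).eq
  -- counting
  have c1 : Nat.card (G ⧸ K) ≤ Nat.card (↥Φ.range →* A) :=
    Nat.card_le_card_of_injective ev hev_inj
  have c2 : Nat.card (↥Φ.range →* A) ≤ Nat.card ↥Φ.range :=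
    card_hom_le_aux hcyc _ ↥Φ.range le_rfl
  have c3 : Nat.card ↥Φ.range ≤ Nat.card ((G ⧸ K) →* A) :=
    Subgroup.card_le_card_group _
  have c4 : Nat.card ((G ⧸ K) →* A) ≤ Nat.card (G ⧸ K) :=
    card_hom_le_aux hcyc _ (G ⧸ K) le_rfl
  have hcard : Nat.card ↥Φ.range = Nat.card ((G ⧸ K) →* A) := by omega
  have hRtop : Φ.range = ⊤ := Subgroup.eq_top_of_card_eq _ hcard
  -- the homomorphism associated to z
  have hzA' : ∀ x : G, ⁅x, z⁆ ∈ A := fun x => by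
    rw [← commutatorElement_inv]; exact A.inv_mem (hzA x)
  let ψ : (G ⧸ K) →* A := QuotientGroup.lift K (pairHom A hA z hzA')
    (fun x hx => MonoidHom.mem_ker.mpr (Subtype.ext
      (commutatorElement_eq_one_iff_commute.mpr (hzc x hx))))
  have hψval : ∀ x : G, (ψ (QuotientGroup.mk x) : G) = ⁅x, z⁆ := fun x =>
    congrArg Subtype.val (QuotientGroup.lift_mk' K
      (fun w hw => MonoidHom.mem_ker.mpr (Subtype.ext
        (commutatorElement_eq_one_iff_commute.mpr (hzc w hw)))) x)
  have hψR : ψ ∈ Φ.range := hRtop ▸ Subgroup.mem_top ψ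
  obtain ⟨t, htΦ⟩ := hψR
  refine ⟨t.1, t.2, ?_⟩
  rw [Subgroup.mem_center_iff]
  intro g
  have hgt : ⁅g, (t : G)⁆ = ⁅g, z⁆ := by
    rw [← hΦval t g, ← hψval g]
    exact congrArg Subtype.val (DFunLike.congr_fun htΦ (QuotientGroup.mk g))
  have hctm : ∀ w : G, w * ⁅g, (t : G)⁆ = ⁅g, (t : G)⁆ * w := fun w =>
    hcent (htA t.1 t.2.2 g) w
  have hinv : ⁅g, (t : G)⁻¹⁆ = ⁅g, (t : G)⁆⁻¹ := comm_inv_right hctm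
  have hcinv : ∀ w : G, w * ⁅g, (t : G)⁻¹⁆ = ⁅g, (t : G)⁻¹⁆ * w := by
    intro w
    rw [hinv]
    have hcw : Commute w ⁅g, (t : G)⁆ := hctm w
    exact hcw.inv_right
  have h1 : ⁅g, z * (t : G)⁻¹⁆ = 1 := by
    rw [comm_mul_right hcinv, hinv, hgt, inv_mul_cancel]
  exact (commutatorElement_eq_one_iff_commute.mp h1).eq

end Stmt18Aux

/-- Let `(H₁, N₁)`, `(H₂, N₂)` be special pairs in `G` with `H₁ ≤ H₂`,
`N₂ ≤ N₁`; set `N₁' = N₁ ∩ H₂` and `N₁'' = N₁ ∩ Z(H₂)`. Then `(H₂, N₁''N₂)` is a special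
pair in `G`, `H₂ ∩ (N₁''N₂) = N₁'' = Z(H₂) ∩ N₁' = (Z(G) ∩ N₁'')·(N₂ ∩ H₂)
= (Z(G) ∩ N₁')·(N₂ ∩ H₂)`, and `Z(G) ∩ (N₁''N₂) = Z(G) ∩ N₁ = (Z(G) ∩ N₂)·(Z(G) ∩ N₁')`. -/
theorem stmt_18 {G : Type*} [Group G] (A H₁ N₁ H₂ N₂ : Subgroup G)
    (hA : A ≤ Subgroup.center G) (hcyc : IsCyclic A) (hfin : Finite A)
    (hsp1 : IsSpecialPair A H₁ N₁) (hsp2 : IsSpecialPair A H₂ N₂)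
    (hH : H₁ ≤ H₂) (hN : N₂ ≤ N₁) :
    IsSpecialPair A H₂
      ((N₁ ⊓ (H₂ ⊓ Subgroup.centralizer (H₂ : Set G))) ⊔ N₂) ∧
    (H₂ ⊓ ((N₁ ⊓ (H₂ ⊓ Subgroup.centralizer (H₂ : Set G))) ⊔ N₂) =
      N₁ ⊓ (H₂ ⊓ Subgroup.centralizer (H₂ : Set G))) ∧
    (N₁ ⊓ (H₂ ⊓ Subgroup.centralizer (H₂ : Set G)) =
      (H₂ ⊓ Subgroup.centralizer (H₂ : Set G)) ⊓ (N₁ ⊓ H₂)) ∧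
    (N₁ ⊓ (H₂ ⊓ Subgroup.centralizer (H₂ : Set G)) =
      (Subgroup.center G ⊓ (N₁ ⊓ (H₂ ⊓ Subgroup.centralizer (H₂ : Set G)))) ⊔
        (N₂ ⊓ H₂)) ∧
    (N₁ ⊓ (H₂ ⊓ Subgroup.centralizer (H₂ : Set G)) =
      (Subgroup.center G ⊓ (N₁ ⊓ H₂)) ⊔ (N₂ ⊓ H₂)) ∧
    (Subgroup.center G ⊓ ((N₁ ⊓ (H₂ ⊓ Subgroup.centralizer (H₂ : Set G))) ⊔ N₂) =
      Subgroup.center G ⊓ N₁) ∧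
    (Subgroup.center G ⊓ N₁ =
      (Subgroup.center G ⊓ N₂) ⊔ (Subgroup.center G ⊓ (N₁ ⊓ H₂))) := by
  classical
  haveI hH₂n : H₂.Normal := hsp2.normal
  haveI hN₂n : N₂.Normal := Stmt18Aux.normal_of_comm_mem hsp2.A_le_N hsp2.comm_mem
  set Z := Subgroup.center G with hZdef
  set C := Subgroup.centralizer (H₂ : Set G) with hCdef
  have hN₂C : N₂ ≤ C := by
    intro m hm
    rw [hCdef, Subgroup.mem_centralizer_iff]
    intro h hh
    exact ((hsp2.commute m hm h hh).symm).eq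
  have hNHle : N₂ ⊓ H₂ ≤ N₁ ⊓ (H₂ ⊓ C) := by
    rintro x ⟨hx2, hxH⟩
    exact ⟨hN hx2, hxH, hN₂C hx2⟩
  have hHNle : H₂ ⊓ N₂ ≤ N₁ ⊓ (H₂ ⊓ C) := by
    rintro x ⟨hxH, hx2⟩
    exact ⟨hN hx2, hxH, hN₂C hx2⟩
  have hN''H : N₁ ⊓ (H₂ ⊓ C) ≤ H₂ := fun x hx => hx.2.1
  have hN''C : N₁ ⊓ (H₂ ⊓ C) ≤ C := fun x hx => hx.2.2
  have hZC : Z ≤ C := Subgroup.center_le_centralizer (H₂ : Set G)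
  -- STATEMENT (2)
  have stmt2 : H₂ ⊓ ((N₁ ⊓ (H₂ ⊓ C)) ⊔ N₂) = N₁ ⊓ (H₂ ⊓ C) := by
    refine le_antisymm ?_ (le_inf hN''H le_sup_left)
    rintro x ⟨hxH, hxS⟩
    have hset : ((((N₁ ⊓ (H₂ ⊓ C)) ⊔ N₂) : Subgroup G) : Set G)
        = ((N₁ ⊓ (H₂ ⊓ C)) : Set G) * (N₂ : Set G) := Subgroup.mul_normal _ _
    have hxS' : x ∈ ((N₁ ⊓ (H₂ ⊓ C)) : Set G) * (N₂ : Set G) := by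
      rw [← hset]; exact hxS
    obtain ⟨u, hu, v, hv, huv⟩ := Set.mem_mul.mp hxS'
    have hvH : v ∈ H₂ := by
      have he : v = u⁻¹ * x := by rw [← huv]; group
      rw [he]
      exact H₂.mul_mem (H₂.inv_mem (hN''H hu)) hxH
    have hvN'' : v ∈ N₁ ⊓ (H₂ ⊓ C) := hNHle ⟨hv, hvH⟩
    have he2 : x = u * v := huv.symm
    rw [he2]
    exact Subgroup.mul_mem _ hu hvN''
  -- STATEMENT (3)
  have stmt3 : N₁ ⊓ (H₂ ⊓ C) = (H₂ ⊓ C) ⊓ (N₁ ⊓ H₂) := by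
    ext x
    simp only [Subgroup.mem_inf]
    tauto
  -- STATEMENT (1) : special pair
  have hsupC : (N₁ ⊓ (H₂ ⊓ C)) ⊔ N₂ ≤ C := sup_le hN''C hN₂C
  have hsupN₁ : (N₁ ⊓ (H₂ ⊓ C)) ⊔ N₂ ≤ N₁ := sup_le inf_le_left hN
  have hsup_eq : ((N₁ ⊓ (H₂ ⊓ C)) ⊔ N₂) ⊔ H₂ = N₂ ⊔ H₂ :=
    le_antisymm (sup_le (sup_le (le_trans hN''H le_sup_right) le_sup_left) le_sup_right)
      (sup_le (le_trans le_sup_right le_sup_left) le_sup_right)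
  have spair : IsSpecialPair A H₂ ((N₁ ⊓ (H₂ ⊓ C)) ⊔ N₂) := by
    constructor
    · exact hsp2.A_le_H
    · exact le_trans hsp2.A_le_N le_sup_right
    · exact hsp2.normal
    · exact hsp2.finiteIndex
    · intro n hn h hh
      exact ((Subgroup.mem_centralizer_iff.mp (hsupC hn) h hh)).symm
    · intro n hn g
      exact hsp1.comm_mem n (hsupN₁ hn) g
    · rw [stmt2, hsup_eq, ← hsp2.centralizer_inf_eq]
      refine le_antisymm (Subgroup.centralizer_le fun w hw => hHNle hw) ?_
      rw [hsp2.centralizer_inf_eq]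
      refine sup_le ?_ ?_
      · intro m hm
        rw [Subgroup.mem_centralizer_iff]
        intro w hw
        exact ((hsp2.commute m hm w (hN''H hw)).symm).eq
      · intro h hh
        rw [Subgroup.mem_centralizer_iff]
        intro w hw
        exact (Subgroup.mem_centralizer_iff.mp (hN''C hw) h hh).symm
  -- STATEMENT (4)
  have stmt4 : N₁ ⊓ (H₂ ⊓ C) = (Z ⊓ (N₁ ⊓ (H₂ ⊓ C))) ⊔ (N₂ ⊓ H₂) := by
    refine le_antisymm ?_ (sup_le inf_le_right hNHle)
    intro z hz
    have hzA : ∀ g : G, ⁅z, g⁆ ∈ A := fun g => hsp1.comm_mem z hz.1 g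
    have hle : N₂ ⊔ H₂ ≤ Subgroup.centralizer {z} := by
      refine sup_le ?_ ?_
      · intro m hm
        rw [Subgroup.mem_centralizer_iff]
        intro w hw
        rw [Set.mem_singleton_iff] at hw
        rw [hw]
        exact ((hsp2.commute m hm z hz.2.1).symm).eq
      · intro h hh
        rw [Subgroup.mem_centralizer_iff]
        intro w hw
        rw [Set.mem_singleton_iff] at hw
        rw [hw]
        exact (Subgroup.mem_centralizer_iff.mp hz.2.2 h hh).symm
    have hzc : ∀ x ∈ N₂ ⊔ H₂, Commute x z := fun x hx =>
      ((Subgroup.mem_centralizer_iff.mp (hle hx) z rfl)).symm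
    obtain ⟨m, hm, hc⟩ := Stmt18Aux.key_lemma A H₂ N₂ hA hcyc hfin hsp2 z hzA hzc
    have hmN'' : m ∈ N₁ ⊓ (H₂ ⊓ C) := hHNle hm
    have hzm : z * m⁻¹ ∈ N₁ ⊓ (H₂ ⊓ C) :=
      Subgroup.mul_mem _ hz (Subgroup.inv_mem _ hmN'')
    have he : z = (z * m⁻¹) * m := by group
    rw [he]
    exact Subgroup.mul_mem _ (Subgroup.mem_sup_left ⟨hc, hzm⟩)
      (Subgroup.mem_sup_right ⟨hm.2, hm.1⟩)
  -- STATEMENT (5)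
  have stmtZeq : Z ⊓ (N₁ ⊓ H₂) = Z ⊓ (N₁ ⊓ (H₂ ⊓ C)) := by
    ext x
    simp only [Subgroup.mem_inf]
    constructor
    · rintro ⟨h1, h2, h3⟩
      exact ⟨h1, h2, h3, hZC h1⟩
    · rintro ⟨h1, h2, h3, _⟩
      exact ⟨h1, h2, h3⟩
  have stmt5 : N₁ ⊓ (H₂ ⊓ C) = (Z ⊓ (N₁ ⊓ H₂)) ⊔ (N₂ ⊓ H₂) := by
    rw [stmtZeq]; exact stmt4
  -- STATEMENT (7)
  have stmt7 : Z ⊓ N₁ = (Z ⊓ N₂) ⊔ (Z ⊓ (N₁ ⊓ H₂)) := by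
    refine le_antisymm ?_
      (sup_le (inf_le_inf_left _ hN) (inf_le_inf_left _ inf_le_left))
    rintro n ⟨hnZ, hnN₁⟩
    have hnK : n ∈ N₂ ⊔ H₂ := by
      rw [← hsp2.centralizer_inf_eq, Subgroup.mem_centralizer_iff]
      intro h hh
      exact Subgroup.mem_center_iff.mp hnZ h
    have hset : ((N₂ ⊔ H₂ : Subgroup G) : Set G) = (N₂ : Set G) * (H₂ : Set G) :=
      Subgroup.mul_normal _ _
    have hn' : n ∈ (N₂ : Set G) * (H₂ : Set G) := by rw [← hset]; exact hnK
    obtain ⟨m, hm, h, hh, hmh⟩ := Set.mem_mul.mp hn'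
    have hhN₁ : h ∈ N₁ := by
      have he : h = m⁻¹ * n := by rw [← hmh]; group
      rw [he]
      exact N₁.mul_mem (N₁.inv_mem (hN hm)) hnN₁
    have hzA : ∀ g : G, ⁅h, g⁆ ∈ A := fun g => hsp1.comm_mem h hhN₁ g
    have h2 : ∀ y ∈ H₂, Commute h y := by
      intro y hy
      have hcy : ∀ u : G, u * ⁅h, y⁆ = ⁅h, y⁆ * u := fun u =>
        Subgroup.mem_center_iff.mp (hA (hsp1.comm_mem h hhN₁ y)) u
      have hny : ⁅m * h, y⁆ = ⁅h, y⁆ * ⁅m, y⁆ := Stmt18Aux.comm_mul_left hcy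
      have hmy : ⁅m, y⁆ = 1 :=
        commutatorElement_eq_one_iff_commute.mpr (hsp2.commute m hm y hy)
      have hnyone : ⁅m * h, y⁆ = 1 := by
        rw [hmh]
        exact commutatorElement_eq_one_iff_commute.mpr
          ((Subgroup.mem_center_iff.mp hnZ y).symm)
      have hhy : ⁅h, y⁆ = 1 := by
        have h3 := hny.symm.trans hnyone
        rwa [hmy, mul_one] at h3
      exact commutatorElement_eq_one_iff_commute.mp hhy
    have hle : N₂ ⊔ H₂ ≤ Subgroup.centralizer {h} := by
      refine sup_le ?_ ?_
      · intro m' hm'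
        rw [Subgroup.mem_centralizer_iff]
        intro w hw
        rw [Set.mem_singleton_iff] at hw
        rw [hw]
        exact ((hsp2.commute m' hm' h hh).symm).eq
      · intro y hy
        rw [Subgroup.mem_centralizer_iff]
        intro w hw
        rw [Set.mem_singleton_iff] at hw
        rw [hw]
        exact (h2 y hy).eq
    have hzc : ∀ x ∈ N₂ ⊔ H₂, Commute x h := fun x hx =>
      ((Subgroup.mem_centralizer_iff.mp (hle hx) h rfl)).symm
    obtain ⟨m', hm', hc'⟩ := Stmt18Aux.key_lemma A H₂ N₂ hA hcyc hfin hsp2 h hzA hzc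
    have huN : h * m'⁻¹ ∈ N₁ ⊓ H₂ :=
      Subgroup.mul_mem _ ⟨hhN₁, hh⟩ (Subgroup.inv_mem _ ⟨hN hm'.2, hm'.1⟩)
    have hvZ : n * (h * m'⁻¹)⁻¹ ∈ Z := Subgroup.mul_mem _ hnZ (Subgroup.inv_mem _ hc')
    have hvN₂ : n * (h * m'⁻¹)⁻¹ ∈ N₂ := by
      have he : n * (h * m'⁻¹)⁻¹ = m * (h * m' * h⁻¹) := by rw [← hmh]; group
      rw [he]
      exact N₂.mul_mem hm (hN₂n.conj_mem m' hm'.2 h)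
    have he2 : n = (n * (h * m'⁻¹)⁻¹) * (h * m'⁻¹) := by group
    rw [he2]
    exact Subgroup.mul_mem _ (Subgroup.mem_sup_left ⟨hvZ, hvN₂⟩)
      (Subgroup.mem_sup_right ⟨hc', huN⟩)
  -- STATEMENT (6)
  have stmt6 : Z ⊓ ((N₁ ⊓ (H₂ ⊓ C)) ⊔ N₂) = Z ⊓ N₁ := by
    refine le_antisymm (inf_le_inf_left _ hsupN₁) ?_
    intro x hx
    obtain ⟨hxZ, hxN₁⟩ := hx
    have h7 : x ∈ (Z ⊓ N₂) ⊔ (Z ⊓ (N₁ ⊓ H₂)) := stmt7.le ⟨hxZ, hxN₁⟩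
    have hle : (Z ⊓ N₂) ⊔ (Z ⊓ (N₁ ⊓ H₂)) ≤ Z ⊓ ((N₁ ⊓ (H₂ ⊓ C)) ⊔ N₂) := by
      refine sup_le (le_inf inf_le_left (le_trans inf_le_right le_sup_right)) ?_
      rintro y ⟨hyZ, hyN₁, hyH⟩
      exact ⟨hyZ, Subgroup.mem_sup_left ⟨hyN₁, hyH, hZC hyZ⟩⟩
    exact hle h7
  exact ⟨spair, stmt2, stmt3, stmt4, stmt5, stmt6, stmt7⟩
end
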